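/- Let $g_n, g_f, g_p$ be independent: $g_u$ Gamma with integer shape $N_u \geq 1$, scale $\Omega_u > 0$; $g_p$ exponential with mean $\Omega_p > 0$. Let $P_{\mathrm{peak}}, I, \xi_n, \xi_f > 0$ and define $P_t^*(g_p) = \min\{P_{\mathrm{peak}}, I/g_p\}$. Then $\Pr\left(g_n \geq \frac{\xi_n}{P_t^*(g_p)},\ g_f \geq \frac{\xi_f}{P_t^*(g_p)}\right) = \left[1 - e^{-I/(\Omega_p P_{\mathrm{peak}})}\right]\prod_{u\in\{n,f\}}\frac{\Gamma[N_u, \xi_u/(\Omega_u P_{\mathrm{peak}})]}{\Gamma(N_u)} + \frac{1}{\Omega_p}\sum_{k=0}^{N_f-1}\sum_{l=0}^{N_n-1}\frac{\xi_n^l\xi_f^k}{k!\,l!\,\Omega_n^l\Omega_f^k I^{k+l}}\,\Gamma\left[k+l+1, \left(\frac{1}{\Omega_p}+\frac{\xi_n}{\Omega_n I}+\frac{\xi_f}{\Omega_f I}\right)\frac{I}{P_{\mathrm{peak}}}\right]\left(\frac{1}{\Omega_p}+\frac{\xi_n}{\Omega_n I}+\frac{\xi_f}{\Omega_f I}\right)^{-(k+l+1)}$.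 -/

import Mathlib

/-!
Conditioning on `g_p = p`, independence factors the event into two Gamma tails:
the probability is `∫ Pr(g_n ≥ ξn / P*(p)) Pr(g_f ≥ ξf / P*(p)) dF_{g_p}(p)`.
For `p ≤ I / P_peak` the power is `P_peak`, the integrand is constant, and its weight is
`Pr(g_p ≤ I / P_peak)`. For `p > I / P_peak` the thresholds are linear in `p`; since a Gamma
tail of integer shape is `e^{-x} ∑_{j<N} x^j / j!`, the integrand against the exponential
density is a finite sum of terms `p^m e^{-αp}`, each an upper incomplete Gamma function.
-/

open MeasureTheory ProbabilityTheory Real Set Filter Topology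

/-- `erlangTail n x = Γ(n, x) / Γ(n)`, the survival function of the Erlang(`n`, 1) law. -/
noncomputable def erlangTail (n : ℕ) (x : ℝ) : ℝ :=
  exp (-x) * ∑ j ∈ Finset.range n, x ^ j / j.factorial

lemma hasDerivAt_sum_range_pow_div_factorial (m : ℕ) (x : ℝ) :
    HasDerivAt (fun t : ℝ => ∑ j ∈ Finset.range (m + 1), t ^ j / j.factorial)
      (∑ j ∈ Finset.range m, x ^ j / j.factorial) x := by
  induction m with
  | zero => simpa using hasDerivAt_const x (1 : ℝ)
  | succ m ih =>
    have hlast : HasDerivAt (fun t : ℝ => t ^ (m + 1) / (m + 1).factorial)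
        (x ^ m / m.factorial) x := by
      refine ((hasDerivAt_pow (m + 1) x).div_const ((m + 1).factorial : ℝ)).congr_deriv ?_
      rw [Nat.factorial_succ]
      push_cast
      field_simp
    rw [Finset.sum_range_succ _ m]
    simp only [Finset.sum_range_succ _ (m + 1)]
    exact ih.fun_add hlast

lemma integral_Ioi_pow_mul_exp_neg (m : ℕ) {a : ℝ} (ha : 0 ≤ a) :
    ∫ t in Ioi a, t ^ m * exp (-t)
      = m.factorial * exp (-a) * ∑ j ∈ Finset.range (m + 1), a ^ j / j.factorial := by
  set e : ℝ → ℝ := fun t => ∑ j ∈ Finset.range (m + 1), t ^ j / j.factorial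
  have hderiv (x : ℝ) :
      HasDerivAt (fun t => -(m.factorial * exp (-t) * e t)) (x ^ m * exp (-x)) x := by
    refine ((((hasDerivAt_neg x).exp.const_mul (m.factorial : ℝ)).fun_mul
      (hasDerivAt_sum_range_pow_div_factorial m x)).fun_neg).congr_deriv ?_
    rw [Finset.sum_range_succ]
    field_simp
    ring
  have hlim : Tendsto (fun t => -(m.factorial * exp (-t) * e t)) atTop (𝓝 0) := by
    have h := (tendsto_finsetSum (Finset.range (m + 1)) fun j _ =>
      ((tendsto_pow_mul_exp_neg_atTop_nhds_zero j).div_const (j.factorial : ℝ)).const_mul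
        (m.factorial : ℝ)).neg
    simp only [zero_div, mul_zero, Finset.sum_const_zero, neg_zero] at h
    refine h.congr fun t => ?_
    simp only [e, Finset.mul_sum]
    congr 1
    exact Finset.sum_congr rfl fun j _ => by ring
  rw [integral_Ioi_of_hasDerivAt_of_nonneg (hderiv a).continuousAt.continuousWithinAt
    (fun x _ => hderiv x) (fun x hx => by have : 0 < x := ha.trans_lt hx; positivity) hlim]
  ring

lemma integrableOn_Ioi_pow_mul_exp_neg_mul (m : ℕ) {α a : ℝ} (hα : 0 < α) (ha : 0 ≤ a) :
    IntegrableOn (fun p => p ^ m * exp (-(α * p))) (Ioi a) := by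
  have h := integrableOn_rpow_mul_exp_neg_mul_rpow (s := m)
    (by linarith [m.cast_nonneg (α := ℝ)]) one_pos hα
  simp only [rpow_natCast, rpow_one, neg_mul] at h
  exact h.mono_set (Ioi_subset_Ioi ha)

lemma integral_Ioi_pow_mul_exp_neg_mul (m : ℕ) {α : ℝ} (hα : 0 < α) (a : ℝ) :
    ∫ p in Ioi a, p ^ m * exp (-(α * p))
      = (∫ t in Ioi (α * a), t ^ m * exp (-t)) / α ^ (m + 1) := by
  rw [← integral_comp_mul_left_Ioi' _ a hα, smul_eq_mul, ← integral_const_mul]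
  refine (div_eq_of_eq_mul (by positivity) ?_).symm
  rw [← integral_mul_const]
  refine setIntegral_congr_fun measurableSet_Ioi fun p _ => ?_
  ring

lemma gammaMeasure_real_Ici {a r : ℝ} (ha : 0 < a) (hr : 0 < r) (s : ℝ) :
    (gammaMeasure a r).real (Ici s) = ∫ x in Ici s, gammaPDFReal a r x := by
  rw [gammaMeasure, measureReal_def, withDensity_apply _ measurableSet_Ici]
  exact (integral_eq_lintegral_of_nonneg_ae (ae_of_all _ (gammaPDFReal_nonneg ha hr))
    (by fun_prop)).symm

lemma gammaMeasure_real_Ici_natCast {n : ℕ} (hn : 1 ≤ n) {r s : ℝ} (hr : 0 < r)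
    (hs : 0 ≤ s) :
    (gammaMeasure n r).real (Ici s)
      = (∫ t in Ioi (r * s), t ^ (n - 1) * exp (-t)) / Gamma n := by
  have hpdf : ∀ x ∈ Ioi s,
      gammaPDFReal n r x = r ^ n / Gamma n * (x ^ (n - 1) * exp (-(r * x))) := by
    intro x hx
    rw [gammaPDFReal, if_pos (hs.trans hx.le), ← Nat.cast_one, ← Nat.cast_sub hn,
      rpow_natCast, rpow_natCast, mul_assoc]
  rw [gammaMeasure_real_Ici (by positivity) hr, integral_Ici_eq_integral_Ioi,
    setIntegral_congr_fun measurableSet_Ioi hpdf, integral_const_mul,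
    integral_Ioi_pow_mul_exp_neg_mul _ hr, Nat.sub_add_cancel hn]
  field_simp

lemma gammaMeasure_real_Ici_eq_erlangTail {n : ℕ} (hn : 1 ≤ n) {r s : ℝ} (hr : 0 < r)
    (hs : 0 ≤ s) :
    (gammaMeasure n r).real (Ici s) = erlangTail n (r * s) := by
  obtain ⟨m, rfl⟩ : ∃ m, n = m + 1 := ⟨n - 1, by omega⟩
  rw [gammaMeasure_real_Ici_natCast hn hr hs, integral_Ioi_pow_mul_exp_neg _ (by positivity),
    Nat.add_sub_cancel, Nat.cast_succ, Gamma_nat_eq_factorial, erlangTail]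
  field_simp

lemma expMeasure_ae_pos {r : ℝ} (hr : 0 < r) : ∀ᵐ p ∂(expMeasure r), 0 < p := by
  have := isProbabilityMeasure_expMeasure hr
  simp only [ae_iff, not_lt]
  change expMeasure r (Iic 0) = 0
  rw [← ofReal_cdf, cdf_expMeasure_eq hr, if_pos le_rfl]
  simp

lemma setIntegral_expMeasure {r : ℝ} (hr : 0 < r) {s : Set ℝ} (hs : MeasurableSet s)
    (hs0 : s ⊆ Ici 0) (g : ℝ → ℝ) :
    ∫ p in s, g p ∂(expMeasure r) = ∫ p in s, r * exp (-(r * p)) * g p := by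
  rw [expMeasure, gammaMeasure, restrict_withDensity hs,
    integral_withDensity_eq_integral_toReal_smul
      (show Measurable (gammaPDF 1 r) from (measurable_gammaPDFReal 1 r).ennreal_ofReal)
      (ae_of_all _ fun _ => ENNReal.ofReal_lt_top)]
  refine setIntegral_congr_fun hs fun p hp => ?_
  rw [gammaPDF_of_nonneg (hs0 hp), Gamma_one, rpow_one, sub_self, rpow_zero,
    div_one, mul_one, ENNReal.toReal_ofReal (by positivity), smul_eq_mul]

lemma integral_expMeasure_of_eqOn {r c K : ℝ} (hr : 0 < r) (hc : 0 ≤ c) {F g : ℝ → ℝ}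
    (hF : Integrable F (expMeasure r)) (hK : EqOn F (fun _ => K) (Ioc 0 c))
    (hg : EqOn F g (Ioi c)) :
    ∫ p, F p ∂(expMeasure r)
      = (1 - exp (-(r * c))) * K + ∫ p in Ioi c, r * exp (-(r * p)) * g p := by
  have := isProbabilityMeasure_expMeasure hr
  rw [← integral_add_compl measurableSet_Iic hF, compl_Iic]
  congr 1
  · rw [setIntegral_congr_ae measurableSet_Iic
      ((expMeasure_ae_pos hr).mono fun p hp hpc => hK ⟨hp, hpc⟩),
      setIntegral_const, ← cdf_eq_real, cdf_expMeasure_eq hr, if_pos hc, smul_eq_mul]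
  · rw [setIntegral_congr_fun measurableSet_Ioi hg,
      setIntegral_expMeasure hr measurableSet_Ioi fun p hp => hc.trans (le_of_lt hp)]

lemma integral_Ioi_exp_mul_erlangTail_mul_erlangTail {r a b c : ℝ} (hα : 0 < r + a + b)
    (hc : 0 ≤ c) (n m : ℕ) :
    ∫ p in Ioi c, r * exp (-(r * p)) * (erlangTail n (a * p) * erlangTail m (b * p))
      = r * ∑ k ∈ Finset.range m, ∑ l ∈ Finset.range n,
          a ^ l * b ^ k / (k.factorial * l.factorial)
            * ((∫ t in Ioi ((r + a + b) * c), t ^ (k + l) * exp (-t))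
              / (r + a + b) ^ (k + l + 1)) := by
  set α := r + a + b
  have hexpand (p : ℝ) :
      r * exp (-(r * p)) * (erlangTail n (a * p) * erlangTail m (b * p))
      = ∑ kl ∈ Finset.range m ×ˢ Finset.range n,
          r * (a ^ kl.2 * b ^ kl.1 / (kl.1.factorial * kl.2.factorial))
            * (p ^ (kl.1 + kl.2) * exp (-(α * p))) := by
    have hexp : exp (-(r * p)) * exp (-(a * p)) * exp (-(b * p)) = exp (-(α * p)) := by
      rw [← exp_add, ← exp_add]
      congr 1
      ring
    calc _ = r * exp (-(α * p)) * ((∑ l ∈ Finset.range n, (a * p) ^ l / l.factorial)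
          * ∑ k ∈ Finset.range m, (b * p) ^ k / k.factorial) := by
          rw [erlangTail, erlangTail, ← hexp]
          ring
      _ = _ := by
        rw [Finset.sum_mul_sum, Finset.sum_comm, Finset.mul_sum, Finset.sum_product]
        refine Finset.sum_congr rfl fun k _ => ?_
        rw [Finset.mul_sum]
        refine Finset.sum_congr rfl fun l _ => ?_
        rw [mul_pow, mul_pow, pow_add]
        ring
  simp_rw [hexpand]
  rw [integral_finsetSum _ fun kl _ =>
      ((integrableOn_Ioi_pow_mul_exp_neg_mul _ (α := α) hα hc).const_mul _),
    Finset.sum_product, Finset.mul_sum]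
  refine Finset.sum_congr rfl fun k _ => ?_
  rw [Finset.mul_sum]
  refine Finset.sum_congr rfl fun l _ => ?_
  rw [integral_const_mul, integral_Ioi_pow_mul_exp_neg_mul _ hα, mul_assoc]

lemma measureReal_le_and_le_eq_integral {Ω : Type*} [MeasurableSpace Ω] {P : Measure Ω}
    [IsProbabilityMeasure P] {X Y Z : Ω → ℝ} (hX : Measurable X) (hY : Measurable Y)
    (hZ : Measurable Z) (hind : iIndepFun ![X, Y, Z] P) {a b : ℝ → ℝ} (ha : Measurable a)
    (hb : Measurable b) :
    P.real {ω | a (Z ω) ≤ X ω ∧ b (Z ω) ≤ Y ω}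
      = ∫ z, (P.map X).real (Ici (a z)) * (P.map Y).real (Ici (b z)) ∂(P.map Z) := by
  set S : Set ((ℝ × ℝ) × ℝ) := {q | a q.2 ≤ q.1.1 ∧ b q.2 ≤ q.1.2}
  have hS : MeasurableSet S :=
    (measurableSet_le (ha.comp measurable_snd) (measurable_fst.comp measurable_fst)).inter
      (measurableSet_le (hb.comp measurable_snd) (measurable_snd.comp measurable_fst))
  have hslice (z : ℝ) :
      (fun xy : ℝ × ℝ => (xy, z)) ⁻¹' S = Ici (a z) ×ˢ Ici (b z) := rfl
  have hXY_Z : IndepFun (fun ω => (X ω, Y ω)) Z P := by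
    simpa using hind.indepFun_prodMk (fun i => by fin_cases i <;> assumption) 0 1 2
      (by decide) (by decide)
  have hX_Y : IndepFun X Y P := by simpa using hind.indepFun (show (0 : Fin 3) ≠ 1 by decide)
  have hlaw :
      P.map (fun ω => ((X ω, Y ω), Z ω)) = ((P.map X).prod (P.map Y)).prod (P.map Z) := by
    rw [(indepFun_iff_map_prod_eq_prod_map_map (hX.prodMk hY).aemeasurable
        hZ.aemeasurable).mp hXY_Z,
      (indepFun_iff_map_prod_eq_prod_map_map hX.aemeasurable hY.aemeasurable).mp hX_Y]
  have htail_meas {μ : Measure ℝ} {f : ℝ → ℝ} (hf : Measurable f) :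
      Measurable fun z => μ (Ici (f z)) :=
    (Antitone.measurable fun _ _ hst => measure_mono (Ici_subset_Ici.mpr hst)).comp hf
  calc P.real {ω | a (Z ω) ≤ X ω ∧ b (Z ω) ≤ Y ω}
      = (((P.map X).prod (P.map Y)).prod (P.map Z)).real S := by
        rw [← hlaw, map_measureReal_apply ((hX.prodMk hY).prodMk hZ) hS]
        rfl
    _ = (∫⁻ z, (P.map X) (Ici (a z)) * (P.map Y) (Ici (b z)) ∂(P.map Z)).toReal := by
        simp_rw [measureReal_def, Measure.prod_apply_symm hS, hslice, Measure.prod_prod]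
    _ = _ := by
        rw [← integral_toReal ((htail_meas ha).fun_mul (htail_meas hb)).aemeasurable
          (ae_of_all _ fun _ => ENNReal.mul_lt_top (measure_lt_top _ _) (measure_lt_top _ _))]
        simp only [ENNReal.toReal_mul, measureReal_def]

lemma measurable_measureReal_Ici (μ : Measure ℝ) [IsFiniteMeasure μ] :
    Measurable fun x => μ.real (Ici x) :=
  Antitone.measurable fun _ _ h => measureReal_mono (Ici_subset_Ici.2 h)

lemma min_div_eq_left_of_le_div {P I p : ℝ} (hP : 0 < P) (hp : 0 < p) (hpI : p ≤ I / P) :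
    min P (I / p) = P :=
  min_eq_left ((le_div_iff₀ hp).2 (by rwa [le_div_iff₀ hP, mul_comm] at hpI))

lemma min_div_eq_right_of_div_lt {P I p : ℝ} (hP : 0 < P) (hI : 0 < I) (hpI : I / P < p) :
    min P (I / p) = I / p :=
  min_eq_right ((div_le_iff₀ ((div_pos hI hP).trans hpI)).2
    (by rw [div_lt_iff₀ hP] at hpI; linarith))

lemma integrable_measureReal_Ici_mul_measureReal_Ici {μ ν ρ : Measure ℝ}
    [IsProbabilityMeasure μ] [IsProbabilityMeasure ν] [IsFiniteMeasure ρ] {a b : ℝ → ℝ}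
    (ha : Measurable a) (hb : Measurable b) :
    Integrable (fun z => μ.real (Ici (a z)) * ν.real (Ici (b z))) ρ := by
  refine Integrable.of_bound (((measurable_measureReal_Ici μ).comp ha).mul
    ((measurable_measureReal_Ici ν).comp hb)).aestronglyMeasurable 1 (ae_of_all _ fun z => ?_)
  rw [Real.norm_of_nonneg (by positivity)]
  exact mul_le_one₀ measureReal_le_one measureReal_nonneg measureReal_le_one

/-- Theorem 5 of the paper (non-outage probability of the PowIntICSI NOMA system):
with `P_t*(g_p) = min{P_peak, I/g_p}`,
`Pr(g_n ≥ ξn/P_t*(g_p), g_f ≥ ξf/P_t*(g_p))` equals the stated closed form. -/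
theorem powinticsi_nonoutage {Ωs : Type*} [MeasureSpace Ωs]
    [IsProbabilityMeasure (ℙ : Measure Ωs)]
    (gn gf gp : Ωs → ℝ) (hmn : Measurable gn) (hmf : Measurable gf) (hmp : Measurable gp)
    (Nn Nf : ℕ) (hNn : 1 ≤ Nn) (hNf : 1 ≤ Nf)
    (Ωn Ωf Ωp : ℝ) (hΩn : 0 < Ωn) (hΩf : 0 < Ωf) (hΩp : 0 < Ωp)
    (hgn : Measure.map gn ℙ = gammaMeasure Nn Ωn⁻¹)
    (hgf : Measure.map gf ℙ = gammaMeasure Nf Ωf⁻¹)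
    (hgp : Measure.map gp ℙ = expMeasure Ωp⁻¹)
    (hind : iIndepFun ![gn, gf, gp] ℙ)
    (I Ppeak ξn ξf : ℝ) (hI : 0 < I) (hP : 0 < Ppeak) (hξn : 0 < ξn) (hξf : 0 < ξf) :
    (ℙ {ω | ξn / min Ppeak (I / gp ω) ≤ gn ω ∧ ξf / min Ppeak (I / gp ω) ≤ gf ω}).toReal
      = (1 - Real.exp (-I / (Ωp * Ppeak)))
          * ((∫ t in Set.Ioi (ξn / (Ωn * Ppeak)), t ^ (Nn - 1) * Real.exp (-t))
              / Real.Gamma Nn)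
          * ((∫ t in Set.Ioi (ξf / (Ωf * Ppeak)), t ^ (Nf - 1) * Real.exp (-t))
              / Real.Gamma Nf)
        + (1 / Ωp) * ∑ k ∈ Finset.range Nf, ∑ l ∈ Finset.range Nn,
            ξn ^ l * ξf ^ k
              / (Nat.factorial k * Nat.factorial l * Ωn ^ l * Ωf ^ k * I ^ (k + l))
            * (∫ t in Set.Ioi ((1 / Ωp + ξn / (Ωn * I) + ξf / (Ωf * I)) * (I / Ppeak)),
                t ^ (k + l) * Real.exp (-t))
            / (1 / Ωp + ξn / (Ωn * I) + ξf / (Ωf * I)) ^ (k + l + 1) := by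
  have hc : 0 < I / Ppeak := div_pos hI hP
  have := isProbabilityMeasure_gammaMeasure (a := Nn) (by exact_mod_cast hNn) (inv_pos.2 hΩn)
  have := isProbabilityMeasure_gammaMeasure (a := Nf) (by exact_mod_cast hNf) (inv_pos.2 hΩf)
  have := isProbabilityMeasure_expMeasure (inv_pos.2 hΩp)
  have hthr (ξ : ℝ) : Measurable fun p : ℝ => ξ / min Ppeak (I / p) := by fun_prop
  set F : ℝ → ℝ := fun p => (gammaMeasure Nn Ωn⁻¹).real (Ici (ξn / min Ppeak (I / p)))
    * (gammaMeasure Nf Ωf⁻¹).real (Ici (ξf / min Ppeak (I / p)))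
  have hF : Integrable F (expMeasure Ωp⁻¹) :=
    integrable_measureReal_Ici_mul_measureReal_Ici (hthr ξn) (hthr ξf)
  have hlow : EqOn F
      (fun _ => (∫ t in Ioi (ξn / (Ωn * Ppeak)), t ^ (Nn - 1) * exp (-t)) / Gamma Nn
        * ((∫ t in Ioi (ξf / (Ωf * Ppeak)), t ^ (Nf - 1) * exp (-t)) / Gamma Nf))
      (Ioc 0 (I / Ppeak)) := by
    intro p hp
    simp only [F, min_div_eq_left_of_le_div hP hp.1 hp.2]
    rw [gammaMeasure_real_Ici_natCast hNn (inv_pos.2 hΩn) (by positivity),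
      gammaMeasure_real_Ici_natCast hNf (inv_pos.2 hΩf) (by positivity)]
    field_simp
  set a := ξn / (Ωn * I)
  set b := ξf / (Ωf * I)
  have hhigh : EqOn F (fun p => erlangTail Nn (a * p) * erlangTail Nf (b * p))
      (Ioi (I / Ppeak)) := by
    intro p hp
    have hp0 : 0 < p := hc.trans hp
    simp only [F, min_div_eq_right_of_div_lt hP hI hp]
    rw [gammaMeasure_real_Ici_eq_erlangTail hNn (inv_pos.2 hΩn) (by positivity),
      gammaMeasure_real_Ici_eq_erlangTail hNf (inv_pos.2 hΩf) (by positivity),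
      show Ωn⁻¹ * (ξn / (I / p)) = a * p by simp only [a]; field_simp,
      show Ωf⁻¹ * (ξf / (I / p)) = b * p by simp only [b]; field_simp]
  rw [← measureReal_def, measureReal_le_and_le_eq_integral hmn hmf hmp hind (hthr ξn) (hthr ξf),
    hgn, hgf, hgp, integral_expMeasure_of_eqOn (inv_pos.2 hΩp) hc.le hF hlow hhigh,
    integral_Ioi_exp_mul_erlangTail_mul_erlangTail (by positivity) hc.le]
  rw [one_div, ← mul_assoc, show -(Ωp⁻¹ * (I / Ppeak)) = -I / (Ωp * Ppeak) by field_simp]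
  refine congrArg _ (congrArg _
    (Finset.sum_congr rfl fun k _ => Finset.sum_congr rfl fun l _ => ?_))
  simp only [a, b]
  rw [div_pow, div_pow, mul_pow, mul_pow]
  field_simp
  ring
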